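/- Let d ≥ 1. There exist constants c > 0 and C > 0 (depending only on d) such that the following holds: if 0 < ε ≤ c, 0 < λ ≤ ε, L = ε⁶λ, and A ⊆ [0,1]^d is measurable with |A| > 0 satisfying |A ∩ (t + Q_L)| / |Q_L| ≤ (1 + ε⁴)|A| for every t ∈ ℝ^d, then the Lebesgue measure of the set { t ∈ ℝ^d : 0 < |A ∩ (t + Q_L)| / |Q_L| ≤ (1 − ε²)|A| } is at most C ε². -/

import Mathlib

/-!
Let `g t = |A ∩ (t + Q_L)|`. By Fubini `∫ g = |A| |Q_L|`; moreover `g` vanishes outside a box of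
side `1 + L`, is at most `(1 + ε⁴) |A| |Q_L|` everywhere and at most `(1 - ε²) |A| |Q_L|` on the
exceptional set `E`. Comparing `∫ g` with these bounds gives
`1 + (ε² + ε⁴) |E| ≤ (1 + ε⁴) (1 + L)^d ≤ (1 + ε⁴)^(d+1) = 1 + O(ε⁴)`, since `L ≤ ε⁴`,
hence `|E| = O(ε²)`.
-/

open MeasureTheory

noncomputable section

/-- The cube `Q_N = [-N/2, N/2]^d` in `ℝ^d`. -/
def cube (d : ℕ) (N : ℝ) : Set (EuclideanSpace ℝ (Fin d)) :=
  {x | ∀ i, |x i| ≤ N / 2}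

/-- The quantity `|A ∩ (t + Q_N)| / |Q_N|`. -/
def densityRatio {d : ℕ} (A : Set (EuclideanSpace ℝ (Fin d))) (N : ℝ)
    (t : EuclideanSpace ℝ (Fin d)) : ℝ :=
  (volume (A ∩ (fun x => t + x) '' cube d N)).toReal / N ^ d

/-- The upper Banach density `δ*(A) = lim_{N→∞} sup_t |A ∩ (t+Q_N)|/|Q_N|`. -/
def upperBanachDensity {d : ℕ} (A : Set (EuclideanSpace ℝ (Fin d))) : ℝ :=
  Filter.limsup (fun N : ℝ => ⨆ t, densityRatio A N t) Filter.atTop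

/-- The unit cube `[0,1]^d` in `ℝ^d`. -/
def unitCube (d : ℕ) : Set (EuclideanSpace ℝ (Fin d)) :=
  {x | ∀ i, 0 ≤ x i ∧ x i ≤ 1}

open ENNReal Set

section Translates

variable {G : Type*} [AddCommGroup G] {A Q : Set G}

lemma preimage_prodMk_setOf_sub_mem (t : G) :
    Prod.mk t ⁻¹' {p : G × G | p.2 ∈ A ∧ p.2 - p.1 ∈ Q} = A ∩ (fun x => t + x) '' Q := by
  ext x
  simp [image_add_left, neg_add_eq_sub]

variable [MeasurableSpace G] [MeasurableAdd₂ G] [MeasurableNeg G] {μ : Measure G}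

lemma measurableSet_setOf_sub_mem (hA : MeasurableSet A) (hQ : MeasurableSet Q) :
    MeasurableSet {p : G × G | p.2 ∈ A ∧ p.2 - p.1 ∈ Q} :=
  (measurable_snd hA).inter ((measurable_snd.sub measurable_fst) hQ)

lemma measurable_measure_inter_image_add_left [SFinite μ] (hA : MeasurableSet A)
    (hQ : MeasurableSet Q) : Measurable fun t => μ (A ∩ (fun x => t + x) '' Q) := by
  simpa only [preimage_prodMk_setOf_sub_mem] using
    measurable_measure_prodMk_left (ν := μ) (measurableSet_setOf_sub_mem hA hQ)

lemma lintegral_measure_inter_image_add_left [SFinite μ] [μ.IsAddLeftInvariant]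
    [μ.IsNegInvariant] (hA : MeasurableSet A) (hQ : MeasurableSet Q) :
    ∫⁻ t, μ (A ∩ (fun x => t + x) '' Q) ∂μ = μ A * μ Q := by
  have hP := measurableSet_setOf_sub_mem hA hQ
  calc ∫⁻ t, μ (A ∩ (fun x => t + x) '' Q) ∂μ = μ.prod μ {p | p.2 ∈ A ∧ p.2 - p.1 ∈ Q} := by
        simp only [Measure.prod_apply hP, preimage_prodMk_setOf_sub_mem]
    _ = ∫⁻ x, A.indicator (fun _ => μ Q) x ∂μ := by
        rw [Measure.prod_apply_symm hP]
        refine lintegral_congr fun x => ?_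
        by_cases hx : x ∈ A
        · simp only [hx, indicator_of_mem]
          convert (Measure.measurePreserving_sub_left μ x).measure_preimage hQ.nullMeasurableSet
            using 2
          ext t
          simp [hx]
        · simp [hx]
    _ = μ A * μ Q := by rw [lintegral_indicator_const hA, mul_comm]

end Translates

lemma lintegral_add_mul_measure_le {X : Type*} [MeasurableSpace X] (ν : Measure X)
    {f : X → ℝ≥0∞} {S E : Set X} {m M : ℝ≥0∞} (hS : MeasurableSet S) (hE : MeasurableSet E)
    (hES : E ⊆ S) (hfM : ∀ x, f x ≤ M) (hfS : ∀ x ∉ S, f x = 0) (hfE : ∀ x ∈ E, f x ≤ m) :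
    ∫⁻ x, f x ∂ν + (M - m) * ν E ≤ M * ν S := by
  rw [← lintegral_indicator_const hE, ← lintegral_indicator_const hS,
    ← lintegral_add_right _ (measurable_const.indicator hE)]
  refine lintegral_mono fun x => ?_
  by_cases hxE : x ∈ E
  · rw [indicator_of_mem hxE, indicator_of_mem (hES hxE)]
    calc f x + (M - m) ≤ min m M + (M - m) := by gcongr; exact le_min (hfE x hxE) (hfM x)
      _ ≤ M := by
        rcases le_total m M with h | h
        · rw [min_eq_left h, add_tsub_cancel_of_le h]
        · rw [min_eq_right h, tsub_eq_zero_of_le h, add_zero]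
  · rw [indicator_of_notMem hxE, add_zero]
    by_cases hxS : x ∈ S
    · rw [indicator_of_mem hxS]; exact hfM x
    · rw [indicator_of_notMem hxS, hfS x hxS]

lemma one_add_pow_le_one_add_mul {x : ℝ} (n : ℕ) (h0 : 0 ≤ x) (h1 : x ≤ 1) :
    (1 + x) ^ n ≤ 1 + (2 ^ n - 1) * x := by
  induction n with
  | zero => norm_num
  | succ n ih =>
    have h2 : (1 : ℝ) ≤ 2 ^ n := one_le_pow₀ one_le_two
    rw [pow_succ, pow_succ]
    nlinarith [mul_le_mul_of_nonneg_right ih (by linarith : (0 : ℝ) ≤ 1 + x),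
      mul_nonneg (mul_nonneg (sub_nonneg.mpr h2) h0) (sub_nonneg.mpr h1)]

section Boxes

variable {d : ℕ}

def box (d : ℕ) (a b : ℝ) : Set (EuclideanSpace ℝ (Fin d)) :=
  {x | ∀ i, x i ∈ Icc a b}

lemma box_eq_preimage_ofLp (a b : ℝ) :
    box d a b = WithLp.ofLp ⁻¹' univ.pi fun _ => Icc a b := by
  ext x
  simp only [box, mem_preimage, mem_univ_pi, mem_ofPred_eq]

lemma measurableSet_box (a b : ℝ) : MeasurableSet (box d a b) := by
  rw [box_eq_preimage_ofLp]
  exact (PiLp.volume_preserving_ofLp (Fin d)).measurable (.univ_pi fun _ => measurableSet_Icc)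

lemma volume_box (a b : ℝ) : volume (box d a b) = ENNReal.ofReal (b - a) ^ d := by
  rw [box_eq_preimage_ofLp, (PiLp.volume_preserving_ofLp (Fin d)).measure_preimage
    (MeasurableSet.univ_pi fun _ => measurableSet_Icc).nullMeasurableSet, volume_pi_pi]
  simp

lemma cube_eq_box (N : ℝ) : cube d N = box d (-(N / 2)) (N / 2) := by
  ext x
  simp [cube, box, abs_le]

lemma measurableSet_cube (N : ℝ) : MeasurableSet (cube d N) :=
  cube_eq_box N ▸ measurableSet_box _ _

lemma volume_cube (N : ℝ) : volume (cube d N) = ENNReal.ofReal N ^ d := by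
  rw [cube_eq_box, volume_box]
  ring_nf

lemma volume_unitCube : volume (unitCube d) = 1 := by
  rw [show unitCube d = box d 0 1 from rfl, volume_box]
  simp

lemma mem_box_of_inter_image_add_cube_nonempty {A : Set (EuclideanSpace ℝ (Fin d))} {N : ℝ}
    {t : EuclideanSpace ℝ (Fin d)} (hA : A ⊆ unitCube d)
    (ht : (A ∩ (fun x => t + x) '' cube d N).Nonempty) : t ∈ box d (-(N / 2)) (1 + N / 2) := by
  obtain ⟨_, hxA, y, hy, rfl⟩ := ht
  intro i
  have hxi := hA hxA i
  have hyi := abs_le.mp (hy i)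
  simp only [PiLp.add_apply] at hxi
  constructor <;> linarith

end Boxes

section DensityRatio

variable {d : ℕ} {A : Set (EuclideanSpace ℝ (Fin d))} {N : ℝ}

lemma measurable_densityRatio (hA : MeasurableSet A) : Measurable (densityRatio A N) :=
  (measurable_measure_inter_image_add_left hA (measurableSet_cube N)).ennreal_toReal.div_const _

lemma lintegral_volume_inter_image_add_cube (hA : MeasurableSet A) (hAfin : volume A ≠ ∞)
    (hN : 0 ≤ N) :
    ∫⁻ t, volume (A ∩ (fun x => t + x) '' cube d N) =
      ENNReal.ofReal ((volume A).toReal * N ^ d) := by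
  rw [lintegral_measure_inter_image_add_left hA (measurableSet_cube N), volume_cube,
    ENNReal.ofReal_mul ENNReal.toReal_nonneg, ofReal_toReal hAfin, ofReal_pow hN]

lemma volume_inter_image_add_cube_le_of_densityRatio_le (hA : volume A ≠ ∞) (hN : 0 < N)
    {t : EuclideanSpace ℝ (Fin d)} {b : ℝ} (h : densityRatio A N t ≤ b) :
    volume (A ∩ (fun x => t + x) '' cube d N) ≤ ENNReal.ofReal (b * N ^ d) := by
  have hfin : volume (A ∩ (fun x => t + x) '' cube d N) ≠ ∞ :=
    ne_top_of_le_ne_top hA (measure_mono inter_subset_left)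
  rw [← ofReal_toReal hfin]
  refine ENNReal.ofReal_le_ofReal ?_
  rwa [densityRatio, div_le_iff₀ (by positivity)] at h

lemma volume_inter_image_add_cube_eq_zero (hA : A ⊆ unitCube d) {t : EuclideanSpace ℝ (Fin d)}
    (ht : t ∉ box d (-(N / 2)) (1 + N / 2)) :
    volume (A ∩ (fun x => t + x) '' cube d N) = 0 := by
  by_contra h
  exact ht (mem_box_of_inter_image_add_cube_nonempty hA (nonempty_of_measure_ne_zero h))

lemma mem_box_of_densityRatio_pos (hA : A ⊆ unitCube d) {t : EuclideanSpace ℝ (Fin d)}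
    (ht : 0 < densityRatio A N t) : t ∈ box d (-(N / 2)) (1 + N / 2) := by
  by_contra h
  rw [densityRatio, volume_inter_image_add_cube_eq_zero hA h, toReal_zero, zero_div] at ht
  exact lt_irrefl 0 ht

def exceptionalSet (A : Set (EuclideanSpace ℝ (Fin d))) (N β : ℝ) :
    Set (EuclideanSpace ℝ (Fin d)) :=
  {t | 0 < densityRatio A N t ∧ densityRatio A N t ≤ β}

lemma measurableSet_exceptionalSet (hA : MeasurableSet A) (β : ℝ) :
    MeasurableSet (exceptionalSet A N β) :=
  (measurableSet_lt measurable_const (measurable_densityRatio hA)).inter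
    (measurableSet_le (measurable_densityRatio hA) measurable_const)

lemma exceptionalSet_subset_box (hA : A ⊆ unitCube d) (β : ℝ) :
    exceptionalSet A N β ⊆ box d (-(N / 2)) (1 + N / 2) :=
  fun _ ht => mem_box_of_densityRatio_pos hA ht.1

lemma volume_exceptionalSet_ne_top (hA : A ⊆ unitCube d) (β : ℝ) :
    volume (exceptionalSet A N β) ≠ ∞ :=
  ne_top_of_le_ne_top (by rw [volume_box]; exact pow_ne_top ofReal_ne_top)
    (measure_mono (exceptionalSet_subset_box hA β))

lemma one_add_mul_toReal_volume_exceptionalSet_le {δ η : ℝ} (hA : MeasurableSet A)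
    (hAcube : A ⊆ unitCube d) (hApos : 0 < (volume A).toReal) (hN : 0 < N) (hδ0 : 0 ≤ δ)
    (hδ1 : δ ≤ 1) (hη : 0 ≤ η) (hbound : ∀ t, densityRatio A N t ≤ (1 + η) * (volume A).toReal) :
    1 + (δ + η) * (volume (exceptionalSet A N ((1 - δ) * (volume A).toReal))).toReal ≤
      (1 + η) * (1 + N) ^ d := by
  set a := (volume A).toReal
  have hAfin : volume A ≠ ∞ :=
    ne_top_of_le_ne_top (volume_unitCube (d := d) ▸ one_ne_top) (measure_mono hAcube)
  have key := lintegral_add_mul_measure_le volume (measurableSet_box _ _)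
    (measurableSet_exceptionalSet hA ((1 - δ) * a)) (exceptionalSet_subset_box hAcube _)
    (fun t => volume_inter_image_add_cube_le_of_densityRatio_le hAfin hN (hbound t))
    (fun _ => volume_inter_image_add_cube_eq_zero hAcube)
    (fun _ ht => volume_inter_image_add_cube_le_of_densityRatio_le hAfin hN ht.2)
  have hlo : 0 ≤ (1 - δ) * a * N ^ d := by
    have : 0 ≤ 1 - δ := by linarith
    positivity
  have hgap : (1 + η) * a * N ^ d - (1 - δ) * a * N ^ d = (δ + η) * (a * N ^ d) := by ring
  rw [lintegral_volume_inter_image_add_cube hA hAfin hN.le, volume_box,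
    show 1 + N / 2 - -(N / 2) = 1 + N by ring, ← ofReal_sub _ hlo, hgap,
    ← ofReal_toReal (volume_exceptionalSet_ne_top hAcube _), ← ofReal_mul (by positivity),
    ← ofReal_add (by positivity) (by positivity), ← ofReal_pow (by positivity),
    ← ofReal_mul (by positivity), ofReal_le_ofReal_iff (by positivity)] at key
  rw [← mul_le_mul_iff_left₀ (by positivity : 0 < a * N ^ d)]
  linarith

end DensityRatio

lemma le_two_pow_mul_sq_of_one_add_mul_le {d : ℕ} {ε L e : ℝ} (hε0 : 0 < ε) (hε1 : ε ≤ 1)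
    (hL0 : 0 ≤ L) (hL : L ≤ ε ^ 4) (he : 0 ≤ e)
    (h : 1 + (ε ^ 2 + ε ^ 4) * e ≤ (1 + ε ^ 4) * (1 + L) ^ d) :
    e ≤ 2 ^ (d + 1) * ε ^ 2 := by
  have hε4 : ε ^ 4 ≤ 1 := pow_le_one₀ hε0.le hε1
  have hgrowth : (1 + ε ^ 4) * (1 + L) ^ d ≤ 1 + (2 ^ (d + 1) - 1) * ε ^ 4 :=
    calc (1 + ε ^ 4) * (1 + L) ^ d ≤ (1 + ε ^ 4) * (1 + ε ^ 4) ^ d := by gcongr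
      _ = (1 + ε ^ 4) ^ (d + 1) := (pow_succ' _ _).symm
      _ ≤ 1 + (2 ^ (d + 1) - 1) * ε ^ 4 :=
        one_add_pow_le_one_add_mul _ (by positivity) hε4
  have : ε ^ 2 * e ≤ ε ^ 2 * (2 ^ (d + 1) * ε ^ 2) := by
    nlinarith [mul_nonneg (pow_nonneg hε0.le 4) he]
  exact le_of_mul_le_mul_left this (by positivity)

theorem small_exceptional_set_from_pointwise_bound_general (d : ℕ) :
    ∃ c C : ℝ, 0 < c ∧ 0 < C ∧
      ∀ (ε lam : ℝ) (A : Set (EuclideanSpace ℝ (Fin d))),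
        MeasurableSet A → A ⊆ unitCube d → 0 < (volume A).toReal →
        0 < ε → ε ≤ c → 0 < lam → lam ≤ ε →
        (∀ t, densityRatio A (ε ^ 6 * lam) t ≤ (1 + ε ^ 4) * (volume A).toReal) →
        volume {t : EuclideanSpace ℝ (Fin d) |
            0 < densityRatio A (ε ^ 6 * lam) t ∧
            densityRatio A (ε ^ 6 * lam) t ≤ (1 - ε ^ 2) * (volume A).toReal} ≤
          ENNReal.ofReal (C * ε ^ 2) := by
  refine ⟨1, 2 ^ (d + 1), one_pos, by positivity, ?_⟩
  intro ε lam A hA hAcube hApos hε hε1 hlam hlamε hbound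
  have hL : 0 < ε ^ 6 * lam := by positivity
  have hLε : ε ^ 6 * lam ≤ ε ^ 4 :=
    calc ε ^ 6 * lam ≤ ε ^ 6 * ε := by gcongr
      _ ≤ ε ^ 4 := by nlinarith [pow_pos hε 4, pow_le_one₀ hε.le hε1 (n := 3)]
  have haverage := one_add_mul_toReal_volume_exceptionalSet_le (δ := ε ^ 2) hA hAcube hApos hL
    (by positivity) (pow_le_one₀ hε.le hε1) (by positivity) hbound
  change volume (exceptionalSet A _ _) ≤ _
  rw [← ofReal_toReal (volume_exceptionalSet_ne_top hAcube _)]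
  exact ofReal_le_ofReal
    (le_two_pow_mul_sq_of_one_add_mul_le hε hε1 hL.le hLε toReal_nonneg haverage)

/-- If `A ⊆ [0,1]^d` has positive measure and satisfies the pointwise bound
`|A ∩ (t+Q_L)|/|Q_L| ≤ (1+ε⁴)|A|` for all `t`, with `L = ε⁶λ`, `0 < λ ≤ ε ≤ c`, then the set
of `t` for which `0 < |A ∩ (t+Q_L)|/|Q_L| ≤ (1-ε²)|A|` has measure at most `Cε²`. -/
theorem small_exceptional_set_from_pointwise_bound (d : ℕ) (hd : 1 ≤ d) :
    ∃ c C : ℝ, 0 < c ∧ 0 < C ∧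
      ∀ (ε lam : ℝ) (A : Set (EuclideanSpace ℝ (Fin d))),
        MeasurableSet A → A ⊆ unitCube d → 0 < (volume A).toReal →
        0 < ε → ε ≤ c → 0 < lam → lam ≤ ε →
        (∀ t, densityRatio A (ε ^ 6 * lam) t ≤ (1 + ε ^ 4) * (volume A).toReal) →
        volume {t : EuclideanSpace ℝ (Fin d) |
            0 < densityRatio A (ε ^ 6 * lam) t ∧
            densityRatio A (ε ^ 6 * lam) t ≤ (1 - ε ^ 2) * (volume A).toReal} ≤
          ENNReal.ofReal (C * ε ^ 2) :=
  small_exceptional_set_from_pointwise_bound_general d
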